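/- arXiv:1601.00139 — 4 statements merged into one kernel-verified Lean document; each statement's English description precedes it below -/
import Mathlib

section
/- Let G=(V,E) be a finite simple connected graph and let S be a nonempty proper subset of V. Then the random walk group centrality satisfies h(S) = 1 if and only if S is a vertex cover of G. -/
open scoped ENNReal Classical

/-- Probability that the random walk with transition kernel `p`, started at `u`,
hits the set `S` for the first time in exactly `n` steps. -/
noncomputable def firstHitProb {α : Type*} [Fintype α] (p : α → α → ℝ≥0∞) (S : Set α) :
    ℕ → α → ℝ≥0∞
  | 0, u => if u ∈ S then 1 else 0
  | n + 1, u => if u ∈ S then 0 else ∑ w, p u w * firstHitProb p S n w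

/-- Hitting time `H(u,S)`: expected number of steps the walk with kernel `p`
started at `u` takes to reach a vertex of `S` for the first time. -/
noncomputable def hitTime {α : Type*} [Fintype α] (p : α → α → ℝ≥0∞) (S : Set α) (u : α) :
    ℝ≥0∞ :=
  ∑' n : ℕ, (n : ℝ≥0∞) * firstHitProb p S n u

/-- Transition kernel of the simple random walk on a graph with adjacency relation `A`:
from `x` move to each neighbour with equal probability `1/d(x)`. -/
noncomputable def unifKernel {α : Type*} [Fintype α] (A : α → α → Prop) (x y : α) : ℝ≥0∞ :=
  if A x y then ((Finset.univ.filter (A x)).card : ℝ≥0∞)⁻¹ else 0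

/-- Random walk group centrality `h(S) = (Σ_{v∈V\S} H(v,S)) / |V\S|`. -/
noncomputable def rwCentrality {V : Type*} [Fintype V] (G : SimpleGraph V) (S : Set V) :
    ℝ≥0∞ :=
  (∑ v ∈ Finset.univ.filter (fun v : V => v ∉ S), hitTime (unifKernel G.Adj) S v) /
    ((Finset.univ.filter (fun v : V => v ∉ S)).card : ℝ≥0∞)


/-! By the minimum principle, the walk on a connected graph hits `S` almost surely, so a walk
started outside `S` needs at least one step: `H(v,S) ≥ 1` for `v ∉ S`. First-step analysis gives
`H(u,S) ≥ 1 + Σ_w p(u,w) H(w,S)` for `u ∉ S`, with equality when `N(u) ⊆ S`. Hence `H(u,S) = 1`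
exactly when `N(u) ⊆ S`, and the average of the numbers `H(v,S) ≥ 1` is `1` exactly when all of
them are. -/

lemma ENNReal.eq_of_le_of_sum_le {ι : Type*} {s : Finset ι} {f g : ι → ℝ≥0∞}
    (hle : ∀ i ∈ s, f i ≤ g i) (hsum : ∑ i ∈ s, g i ≤ ∑ i ∈ s, f i)
    (hfin : ∑ i ∈ s, f i ≠ ∞) {i : ι} (hi : i ∈ s) : g i = f i := by
  refine le_antisymm ?_ (hle i hi)
  have hrest : ∑ j ∈ s.erase i, f j ≠ ∞ :=
    ne_top_of_le_ne_top hfin (Finset.sum_le_sum_of_subset (Finset.erase_subset i s))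
  refine (ENNReal.add_le_add_iff_right hrest).mp ?_
  calc g i + ∑ j ∈ s.erase i, f j
      ≤ g i + ∑ j ∈ s.erase i, g j := by
        gcongr with j hj; exact hle j (Finset.mem_of_mem_erase hj)
    _ = ∑ j ∈ s, g j := Finset.add_sum_erase s g hi
    _ ≤ ∑ j ∈ s, f j := hsum
    _ = f i + ∑ j ∈ s.erase i, f j := (Finset.add_sum_erase s f hi).symm

lemma ENNReal.sum_div_card_eq_one_iff {ι : Type*} {s : Finset ι} {f : ι → ℝ≥0∞}
    (hs : s.Nonempty) (hf : ∀ i ∈ s, 1 ≤ f i) :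
    (∑ i ∈ s, f i) / s.card = 1 ↔ ∀ i ∈ s, f i = 1 := by
  have hcard : (s.card : ℝ≥0∞) ≠ 0 := by simpa using hs.ne_empty
  rw [ENNReal.div_eq_one_iff hcard (ENNReal.natCast_ne_top _)]
  constructor
  · intro hsum i hi
    refine ENNReal.eq_of_le_of_sum_le hf ?_ (by simp) hi
    simp [hsum]
  · intro h
    simp [Finset.sum_congr rfl h]

lemma ENNReal.eq_of_sum_mul_eq_of_le {ι : Type*} [Fintype ι] {w f : ι → ℝ≥0∞} {m : ℝ≥0∞}
    (hw : ∑ i, w i = 1) (hm : m ≠ ∞) (hle : ∀ i, m ≤ f i) (havg : ∑ i, w i * f i = m)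
    {i : ι} (hi₀ : w i ≠ 0) (hi : w i ≠ ∞) : f i = m := by
  have hwm : ∑ j, w j * m = m := by rw [← Finset.sum_mul, hw, one_mul]
  refine (ENNReal.mul_right_inj hi₀ hi).mp ?_
  exact ENNReal.eq_of_le_of_sum_le (fun j _ => mul_le_mul_right (hle j) _)
    (by rw [havg, hwm]) (by rwa [hwm]) (Finset.mem_univ i)

noncomputable def hitProb {α : Type*} [Fintype α] (p : α → α → ℝ≥0∞) (S : Set α) (u : α) :
    ℝ≥0∞ :=
  ∑' n : ℕ, firstHitProb p S n u

section FirstStep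

variable {α : Type*} [Fintype α] {p : α → α → ℝ≥0∞} {S : Set α} {u : α}

lemma firstHitProb_succ_of_mem (hu : u ∈ S) (n : ℕ) : firstHitProb p S (n + 1) u = 0 := by
  simp [firstHitProb, hu]

lemma tsum_mul_firstHitProb_of_notMem (c : ℕ → ℝ≥0∞) (hu : u ∉ S) :
    ∑' n, c n * firstHitProb p S n u =
      ∑ w, p u w * ∑' n, c (n + 1) * firstHitProb p S n w := by
  rw [tsum_eq_zero_add' ENNReal.summable]
  simp only [firstHitProb, hu, if_false, mul_zero, zero_add, Finset.mul_sum]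
  rw [Summable.tsum_finsetSum fun _ _ => ENNReal.summable]
  refine Finset.sum_congr rfl fun w _ => ?_
  rw [← ENNReal.tsum_mul_left]
  exact tsum_congr fun n => mul_left_comm _ _ _

lemma hitProb_of_mem (hu : u ∈ S) : hitProb p S u = 1 := by
  rw [hitProb, tsum_eq_single 0 fun n hn => ?_]
  · simp [firstHitProb, hu]
  · obtain ⟨m, rfl⟩ := Nat.exists_eq_succ_of_ne_zero hn
    exact firstHitProb_succ_of_mem hu m

lemma hitProb_of_notMem (hu : u ∉ S) : hitProb p S u = ∑ w, p u w * hitProb p S w := by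
  simpa [hitProb] using tsum_mul_firstHitProb_of_notMem (p := p) (fun _ => 1) hu

lemma hitTime_of_mem (hu : u ∈ S) : hitTime p S u = 0 := by
  refine ENNReal.tsum_eq_zero.mpr fun n => ?_
  cases n with
  | zero => simp
  | succ m => rw [firstHitProb_succ_of_mem hu, mul_zero]

lemma hitTime_of_notMem (hu : u ∉ S) :
    hitTime p S u = ∑ w, p u w * (hitTime p S w + hitProb p S w) := by
  rw [hitTime, tsum_mul_firstHitProb_of_notMem _ hu]
  refine Finset.sum_congr rfl fun w _ => ?_
  simp only [Nat.cast_succ, add_mul, one_mul, ENNReal.tsum_add, hitTime, hitProb]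

end FirstStep

lemma SimpleGraph.Connected.exists_adj_of_notMem {V : Type*} {G : SimpleGraph V} {S : Set V}
    (hconn : G.Connected) (hS : S.Nonempty) {u : V} (hu : u ∉ S) : ∃ w, G.Adj u w := by
  obtain ⟨s, hs⟩ := hS
  have : Nontrivial V := ⟨⟨u, s, fun h => hu (h ▸ hs)⟩⟩
  exact hconn.preconnected.exists_adj_of_nontrivial u

section SimpleRandomWalk

variable {V : Type*} [Fintype V] {G : SimpleGraph V}

lemma unifKernel_eq_zero_of_not_adj {x y : V} (h : ¬G.Adj x y) : unifKernel G.Adj x y = 0 :=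
  if_neg h

lemma unifKernel_ne_zero_of_adj {x y : V} (h : G.Adj x y) : unifKernel G.Adj x y ≠ 0 := by
  simp [unifKernel, h]

lemma unifKernel_ne_top_of_adj {x y : V} (h : G.Adj x y) : unifKernel G.Adj x y ≠ ∞ := by
  have hdeg : (Finset.univ.filter (G.Adj x)).card ≠ 0 :=
    Finset.card_ne_zero.mpr ⟨y, by simpa using h⟩
  simp [unifKernel, h, hdeg]

lemma sum_unifKernel_eq_one {x y : V} (h : G.Adj x y) : ∑ w, unifKernel G.Adj x w = 1 := by
  have hdeg : (Finset.univ.filter (G.Adj x)).card ≠ 0 :=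
    Finset.card_ne_zero.mpr ⟨y, by simpa using h⟩
  simp only [unifKernel]
  rw [← Finset.sum_filter, Finset.sum_const, nsmul_eq_mul]
  exact ENNReal.mul_inv_cancel (by exact_mod_cast hdeg) (ENNReal.natCast_ne_top _)

variable {S : Set V}

/-- Minimum principle: `hitProb` is harmonic off `S`, so a minimum below `1` would spread along a
path to `S`, where the value is `1`. -/
lemma one_le_hitProb (hconn : G.Connected) (hS : S.Nonempty) (v : V) :
    1 ≤ hitProb (unifKernel G.Adj) S v := by
  set P := hitProb (unifKernel G.Adj) S
  obtain ⟨v₀, -, hmin⟩ := Finset.univ.exists_min_image P ⟨v, Finset.mem_univ v⟩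
  obtain ⟨s, hs⟩ := hS
  have hs1 : P s = 1 := hitProb_of_mem hs
  by_contra! hlt
  have hm : P v₀ < 1 := (hmin v (Finset.mem_univ v)).trans_lt hlt
  obtain ⟨w⟩ := hconn.preconnected v₀ s
  obtain ⟨d, -, hd₁, hd₂⟩ := w.exists_boundary_dart {a | P a = P v₀} rfl (by simp [hs1, hm.ne'])
  have hd : d.fst ∉ S := fun h => by simp [P, hitProb_of_mem h, hm.ne'] at hd₁
  exact hd₂ <| ENNReal.eq_of_sum_mul_eq_of_le (sum_unifKernel_eq_one d.adj) hm.ne_top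
    (fun a => hmin a (Finset.mem_univ a)) ((hitProb_of_notMem hd).symm.trans hd₁)
    (unifKernel_ne_zero_of_adj d.adj) (unifKernel_ne_top_of_adj d.adj)

lemma one_add_sum_le_hitTime (hconn : G.Connected) (hS : S.Nonempty) {u : V} (hu : u ∉ S) :
    1 + ∑ w, unifKernel G.Adj u w * hitTime (unifKernel G.Adj) S w ≤
      hitTime (unifKernel G.Adj) S u := by
  obtain ⟨w, hw⟩ := hconn.exists_adj_of_notMem hS hu
  calc 1 + ∑ w, unifKernel G.Adj u w * hitTime (unifKernel G.Adj) S w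
      = ∑ w, unifKernel G.Adj u w * (hitTime (unifKernel G.Adj) S w + 1) := by
        simp only [mul_add, mul_one, Finset.sum_add_distrib, sum_unifKernel_eq_one hw, add_comm]
    _ ≤ ∑ w, unifKernel G.Adj u w *
          (hitTime (unifKernel G.Adj) S w + hitProb (unifKernel G.Adj) S w) := by
        gcongr with w; exact one_le_hitProb hconn hS w
    _ = hitTime (unifKernel G.Adj) S u := (hitTime_of_notMem hu).symm

lemma one_le_hitTime (hconn : G.Connected) (hS : S.Nonempty) {u : V} (hu : u ∉ S) :
    1 ≤ hitTime (unifKernel G.Adj) S u :=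
  le_trans le_self_add (one_add_sum_le_hitTime hconn hS hu)

lemma hitTime_eq_one_iff (hconn : G.Connected) (hS : S.Nonempty) {u : V} (hu : u ∉ S) :
    hitTime (unifKernel G.Adj) S u = 1 ↔ ∀ w, G.Adj u w → w ∈ S := by
  constructor
  · intro h1 w hw
    by_contra hwS
    have : 1 + unifKernel G.Adj u w ≤ 1 + 0 := calc
      1 + unifKernel G.Adj u w
          ≤ 1 + unifKernel G.Adj u w * hitTime (unifKernel G.Adj) S w := by
        gcongr; exact le_mul_of_one_le_right' (one_le_hitTime hconn hS hwS)
      _ ≤ 1 + ∑ w, unifKernel G.Adj u w * hitTime (unifKernel G.Adj) S w := by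
        gcongr
        exact Finset.single_le_sum_of_canonicallyOrdered
          (f := fun x => unifKernel G.Adj u x * hitTime (unifKernel G.Adj) S x) (Finset.mem_univ w)
      _ ≤ hitTime (unifKernel G.Adj) S u := one_add_sum_le_hitTime hconn hS hu
      _ = 1 + 0 := by rw [h1, add_zero]
    exact unifKernel_ne_zero_of_adj hw
      (nonpos_iff_eq_zero.mp ((ENNReal.add_le_add_iff_left ENNReal.one_ne_top).mp this))
  · intro hN
    obtain ⟨w, hw⟩ := hconn.exists_adj_of_notMem hS hu
    rw [hitTime_of_notMem hu, ← sum_unifKernel_eq_one hw]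
    refine Finset.sum_congr rfl fun x _ => ?_
    by_cases hx : G.Adj u x
    · rw [hitTime_of_mem (hN x hx), hitProb_of_mem (hN x hx), zero_add, mul_one]
    · simp [unifKernel_eq_zero_of_not_adj hx]

end SimpleRandomWalk

/-- For a finite simple connected graph `G` and a nonempty proper subset `S`
of the vertices, the random walk group centrality satisfies `h(S) = 1` iff `S` is a
vertex cover of `G`. -/
theorem rwCentrality_eq_one_iff_vertexCover {V : Type*} [Fintype V] (G : SimpleGraph V)
    (hconn : G.Connected) (S : Set V) (hS : S.Nonempty) (hSne : S ≠ Set.univ) :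
    rwCentrality G S = 1 ↔ ∀ u w : V, G.Adj u w → u ∈ S ∨ w ∈ S := by
  obtain ⟨v, hv⟩ := Set.ne_univ_iff_exists_notMem S |>.mp hSne
  rw [rwCentrality, ENNReal.sum_div_card_eq_one_iff ⟨v, by simpa using hv⟩
    fun u hu => one_le_hitTime hconn hS (by simpa using hu)]
  simp only [Finset.mem_filter, Finset.mem_univ, true_and]
  refine forall_congr' fun u => ?_
  by_cases hu : u ∈ S
  · simp [hu]
  · simp [hu, hitTime_eq_one_iff hconn hS hu]
end

section
/- Let G=(V,E) be a finite simple connected graph and let S ⊂ V be a nonempty subset with |V\S| ≥ 2. Then σ_uv(S) = σ_uv for every pair of distinct vertices u,v ∈ V\S (i.e. every shortest path between any two vertices outside S contains a vertex of S) if and only if S is a vertex cover of G; consequently, the group betweenness centrality satisfies C_bc(S) = 1 if and only if S is a vertex cover of G. -/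
open scoped Classical

/-- `σ_uv`: the number of shortest `u`–`v` paths in `G`. -/
noncomputable def nShortestPaths {V : Type*} (G : SimpleGraph V) (u v : V) : ℕ :=
  {p : G.Walk u v | p.IsPath ∧ p.length = G.dist u v}.ncard

/-- `σ_uv(S)`: the number of shortest `u`–`v` paths in `G` containing at least one
vertex of `S`. -/
noncomputable def nShortestPathsThrough {V : Type*} (G : SimpleGraph V) (S : Set V)
    (u v : V) : ℕ :=
  {p : G.Walk u v | p.IsPath ∧ p.length = G.dist u v ∧ ∃ x ∈ S, x ∈ p.support}.ncard

/-- Group betweenness centrality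
`C_bc(S) = (2/(|V\S|(|V\S|-1))) Σ_{unordered pairs u≠v ∉ S} σ_uv(S)/σ_uv`.
Since `σ` and `σ(S)` are symmetric in `u,v`, summing over ordered pairs (`offDiag`)
counts every unordered pair twice, cancelling the factor `2`. -/
noncomputable def betweennessCentrality {V : Type*} [Fintype V] (G : SimpleGraph V)
    (S : Set V) : ℝ :=
  (∑ q ∈ (Finset.univ.filter (fun v : V => v ∉ S)).offDiag,
      (nShortestPathsThrough G S q.1 q.2 : ℝ) / (nShortestPaths G q.1 q.2 : ℝ)) /
    (((Finset.univ.filter (fun v : V => v ∉ S)).card : ℝ) *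
      (((Finset.univ.filter (fun v : V => v ∉ S)).card : ℝ) - 1))

private lemma shortestPaths_finite {V : Type*} [Fintype V] (G : SimpleGraph V) (u v : V) :
    {p : G.Walk u v | p.IsPath ∧ p.length = G.dist u v}.Finite :=
  Set.toFinite _

private lemma support_of_length_one {V : Type*} {G : SimpleGraph V} {u v : V}
    {p : G.Walk u v} (h : p.length = 1) : p.support = [u, v] := by
  cases p with
  | nil => simp at h
  | cons ha q =>
    cases q with
    | nil => simp
    | cons hb r => simp [SimpleGraph.Walk.length_cons] at h

private lemma sigma_pos {V : Type*} [Fintype V] {G : SimpleGraph V} (hconn : G.Connected)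
    (u v : V) : 0 < nShortestPaths G u v := by
  obtain ⟨p, hp⟩ := hconn.exists_path_of_dist u v
  rw [nShortestPaths, Set.ncard_pos (shortestPaths_finite G u v)]
  exact ⟨p, hp⟩

private lemma through_le {V : Type*} [Fintype V] (G : SimpleGraph V) (S : Set V) (u v : V) :
    nShortestPathsThrough G S u v ≤ nShortestPaths G u v :=
  Set.ncard_le_ncard (fun p hp => ⟨hp.1, hp.2.1⟩) (shortestPaths_finite G u v)

/-- If `S` is a vertex cover, every shortest path between distinct vertices meets `S`. -/
private lemma through_eq_of_cover {V : Type*} [Fintype V] (G : SimpleGraph V) (S : Set V)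
    (hvc : ∀ u w : V, G.Adj u w → u ∈ S ∨ w ∈ S) {u v : V} (hu : u ∉ S) (huv : u ≠ v) :
    nShortestPathsThrough G S u v = nShortestPaths G u v := by
  unfold nShortestPathsThrough nShortestPaths
  congr 1
  ext p
  simp only [Set.mem_setOf_eq, and_congr_right_iff]
  intro _
  constructor
  · rintro ⟨h, -⟩; exact h
  · intro hlen
    refine ⟨hlen, ?_⟩
    cases p with
    | nil => exact absurd rfl huv
    | cons ha q =>
      rcases hvc _ _ ha with h | h
      · exact absurd h hu
      · exact ⟨_, h, by simp [SimpleGraph.Walk.support_cons]⟩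

/-- If `u, w ∉ S` are adjacent, then no shortest `u`–`w` path meets `S`. -/
private lemma through_eq_zero {V : Type*} [Fintype V] (G : SimpleGraph V) (S : Set V)
    {u w : V} (hu : u ∉ S) (hw : w ∉ S) (ha : G.Adj u w) :
    nShortestPathsThrough G S u w = 0 := by
  have hdist : G.dist u w = 1 := SimpleGraph.dist_eq_one_iff_adj.mpr ha
  rw [nShortestPathsThrough, Set.ncard_eq_zero (Set.Finite.subset
    (shortestPaths_finite G u w) (fun p hp => ⟨hp.1, hp.2.1⟩))]
  ext p
  simp only [Set.mem_setOf_eq, Set.mem_empty_iff_false, iff_false, not_and]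
  intro _ hlen
  rw [hdist] at hlen
  rw [support_of_length_one hlen]
  rintro ⟨x, hxS, hx⟩
  simp only [List.mem_cons, List.not_mem_nil, or_false] at hx
  rcases hx with h | h
  · exact hu (h ▸ hxS)
  · exact hw (h ▸ hxS)

/-- For a finite simple connected graph `G` and a nonempty subset `S` of the
vertices with `|V\S| ≥ 2`, one has `σ_uv(S) = σ_uv` for all pairs of distinct `u,v ∉ S`
iff `S` is a vertex cover of `G`; consequently `C_bc(S) = 1` iff `S` is a vertex cover. -/
theorem betweennessCentrality_eq_one_iff_vertexCover {V : Type*} [Fintype V]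
    (G : SimpleGraph V) (hconn : G.Connected) (S : Set V) (hS : S.Nonempty)
    (hcard : 2 ≤ (Finset.univ.filter (fun v : V => v ∉ S)).card) :
    ((∀ u ∉ S, ∀ v ∉ S, u ≠ v →
        nShortestPathsThrough G S u v = nShortestPaths G u v) ↔
      ∀ u w : V, G.Adj u w → u ∈ S ∨ w ∈ S) ∧
    (betweennessCentrality G S = 1 ↔ ∀ u w : V, G.Adj u w → u ∈ S ∨ w ∈ S) := by
  set T := Finset.univ.filter (fun v : V => v ∉ S) with hT
  have hmemT : ∀ v : V, v ∈ T ↔ v ∉ S := by intro v; simp [hT]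
  -- Part 1
  have part1 : (∀ u ∉ S, ∀ v ∉ S, u ≠ v →
      nShortestPathsThrough G S u v = nShortestPaths G u v) ↔
      ∀ u w : V, G.Adj u w → u ∈ S ∨ w ∈ S := by
    constructor
    · intro h u w ha
      by_contra hc
      push_neg at hc
      obtain ⟨hu, hw⟩ := hc
      have h0 := through_eq_zero G S hu hw ha
      have heq := h u hu w hw ha.ne
      have hpos := sigma_pos hconn u w
      omega
    · intro hvc u hu v _ huv
      exact through_eq_of_cover G S hvc hu huv
  refine ⟨part1, ?_⟩
  -- Part 2
  have hn : (2 : ℝ) ≤ (T.card : ℝ) := by exact_mod_cast hcard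
  have hdenom_pos : 0 < (T.card : ℝ) * ((T.card : ℝ) - 1) := by nlinarith
  have hoffcard : ((T.offDiag.card : ℝ)) = (T.card : ℝ) * ((T.card : ℝ) - 1) := by
    rw [Finset.offDiag_card]
    have h1 : T.card ≤ T.card * T.card := Nat.le_mul_of_pos_left _ (by omega)
    push_cast [Nat.cast_sub h1]
    ring
  have key : ∀ q ∈ T.offDiag,
      (nShortestPathsThrough G S q.1 q.2 : ℝ) / (nShortestPaths G q.1 q.2 : ℝ) ≤ 1 := by
    intro q hq
    have hpos := sigma_pos hconn q.1 q.2
    rw [div_le_one (by exact_mod_cast hpos)]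
    exact_mod_cast through_le G S q.1 q.2
  rw [betweennessCentrality, ← hT, div_eq_one_iff_eq (ne_of_gt hdenom_pos), ← hoffcard]
  constructor
  · intro hsum
    by_contra hvc
    rw [← part1] at hvc
    push_neg at hvc
    obtain ⟨u, hu, v, hv, huv, hne⟩ := hvc
    have hlt : (nShortestPathsThrough G S u v : ℝ) / (nShortestPaths G u v : ℝ) < 1 := by
      have hpos := sigma_pos hconn u v
      rw [div_lt_one (by exact_mod_cast hpos)]
      exact_mod_cast lt_of_le_of_ne (through_le G S u v) hne
    have hmem : ((u, v) : V × V) ∈ T.offDiag := by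
      rw [Finset.mem_offDiag]
      exact ⟨(hmemT u).mpr hu, (hmemT v).mpr hv, huv⟩
    have : (∑ q ∈ T.offDiag,
        (nShortestPathsThrough G S q.1 q.2 : ℝ) / (nShortestPaths G q.1 q.2 : ℝ)) <
        ∑ _q ∈ T.offDiag, (1 : ℝ) :=
      Finset.sum_lt_sum key ⟨(u, v), hmem, hlt⟩
    rw [Finset.sum_const, nsmul_eq_mul, mul_one] at this
    linarith [hsum]
  · intro hvc
    have : ∀ q ∈ T.offDiag,
        (nShortestPathsThrough G S q.1 q.2 : ℝ) / (nShortestPaths G q.1 q.2 : ℝ) = 1 := by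
      intro q hq
      rw [Finset.mem_offDiag] at hq
      have heq := through_eq_of_cover G S hvc ((hmemT q.1).mp hq.1) hq.2.2
      rw [heq]
      exact div_self (by exact_mod_cast (sigma_pos hconn q.1 q.2).ne')
    rw [Finset.sum_congr rfl this, Finset.sum_const, nsmul_eq_mul, mul_one]
end

section
/- Let n ≥ 2 and m ≥ 1 be integers. In the graph G_n^m, the sets S_K and S_T have equal group closeness centrality, namely C_c(S_K) = C_c(S_T) = (3n−2)/(2n−1). -/
open scoped Classical

/-- Distance from a vertex `u` to a set `S`: `d(u,S) = min_{w∈S} d(u,w)`. -/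
noncomputable def distToSet {V : Type*} (G : SimpleGraph V) (u : V) (S : Set V) : ℕ :=
  sInf ((fun w => G.dist u w) '' S)

/-- Group closeness centrality `C_c(S) = (Σ_{v∈V\S} d(v,S)) / |V\S|`. -/
noncomputable def closenessCentrality {V : Type*} [Fintype V] (G : SimpleGraph V)
    (S : Set V) : ℝ :=
  (∑ v ∈ Finset.univ.filter (fun v : V => v ∉ S), (distToSet G v S : ℝ)) /
    ((Finset.univ.filter (fun v : V => v ∉ S)).card : ℝ)

/-- Vertices of the graph `G_n^m`: a central vertex `v` (the `Sum.inl` summand),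
the vertices `(i,j)` of the cliques `K_n^i` (the first `Sum.inr ∘ Sum.inl` summand,
with `j = 0` the designated vertex `k_n^i`), and the vertices `(i,j)` of the stars
`T_n^i` (the second summand, with `j = 0` the root `t_n^i`). -/
abbrev GnmVertex (n m : ℕ) : Type := Unit ⊕ (Fin m × Fin n) ⊕ (Fin m × Fin n)

/-- Generating relation for `G_n^m`: `v` is joined to each `k_n^i` and each `t_n^i`;
each clique copy `K_n^i` is complete; in each star `T_n^i` the root `t_n^i` is joined
to every other vertex of `T_n^i`. -/
def gnmRel (n m : ℕ) : GnmVertex n m → GnmVertex n m → Prop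
  | Sum.inl _, Sum.inr (Sum.inl (_, j)) => (j : ℕ) = 0
  | Sum.inl _, Sum.inr (Sum.inr (_, j)) => (j : ℕ) = 0
  | Sum.inr (Sum.inl (i, _)), Sum.inr (Sum.inl (i', _)) => i = i'
  | Sum.inr (Sum.inr (i, j)), Sum.inr (Sum.inr (i', j')) =>
      i = i' ∧ ((j : ℕ) = 0 ∨ (j' : ℕ) = 0)
  | _, _ => False

/-- The graph `G_n^m`: a central vertex `v`, `m` disjoint copies of the complete graph
`K_n` each joined to `v` by a single edge through its designated vertex `k_n^i`, and
`m` disjoint stars (trees of height 1) on `n` vertices whose roots `t_n^i` are adjacent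
to `v`. -/
def Gnm (n m : ℕ) : SimpleGraph (GnmVertex n m) := SimpleGraph.fromRel (gnmRel n m)

/-- The set `S_K = {v, k_n^1, …, k_n^m}`. -/
def setSK (n m : ℕ) : Set (GnmVertex n m) :=
  {x | x = Sum.inl () ∨ ∃ (i : Fin m) (j : Fin n), (j : ℕ) = 0 ∧ x = Sum.inr (Sum.inl (i, j))}

/-- The set `S_T = {v, t_n^1, …, t_n^m}`. -/
def setST (n m : ℕ) : Set (GnmVertex n m) :=
  {x | x = Sum.inl () ∨ ∃ (i : Fin m) (j : Fin n), (j : ℕ) = 0 ∧ x = Sum.inr (Sum.inr (i, j))}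

/-! Both sets contain the centre `v`. For `S_K`, the other clique vertices and the star roots
lie at distance 1 and the star leaves at distance 2 (through their root and `v`); for `S_T`
the roles are exchanged: star leaves and the `k_n^i` at distance 1, the other clique vertices
at distance 2. Either way the `m(2n-1)` vertices outside the set have total distance
`m((n-1) + 1 + 2(n-1)) = m(3n-2)`. -/

namespace SimpleGraph

variable {V : Type*} {G : SimpleGraph V} {u w : V} {S : Set V}

theorem distToSet_le_dist (hw : w ∈ S) : distToSet G u S ≤ G.dist u w :=
  Nat.sInf_le ⟨w, hw, rfl⟩

theorem exists_mem_dist_eq_distToSet (hS : S.Nonempty) :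
    ∃ w ∈ S, G.dist u w = distToSet G u S :=
  Nat.sInf_mem (hS.image _)

theorem distToSet_of_mem (hu : u ∈ S) : distToSet G u S = 0 :=
  Nat.eq_zero_of_le_zero (dist_self ▸ distToSet_le_dist hu)

theorem Preconnected.distToSet_pos (hG : G.Preconnected) (hu : u ∉ S) (hS : S.Nonempty) :
    0 < distToSet G u S := by
  obtain ⟨w', hw', hd⟩ := exists_mem_dist_eq_distToSet (u := u) hS
  refine Nat.pos_of_ne_zero fun h0 => hu ?_
  rwa [(hG u w').dist_eq_zero_iff.mp (hd.trans h0)]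

theorem Preconnected.distToSet_eq_one (hG : G.Preconnected) (hu : u ∉ S) (hw : w ∈ S)
    (huw : G.Adj u w) : distToSet G u S = 1 :=
  le_antisymm (dist_eq_one_iff_adj.mpr huw ▸ distToSet_le_dist hw)
    (hG.distToSet_pos hu ⟨w, hw⟩)

theorem Preconnected.distToSet_eq_two {x : V} (hG : G.Preconnected) (hu : u ∉ S)
    (hnadj : ∀ w ∈ S, ¬G.Adj u w) (hw : w ∈ S) (hux : G.Adj u x) (hxw : G.Adj x w) :
    distToSet G u S = 2 := by
  have hle : distToSet G u S ≤ 2 :=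
    (distToSet_le_dist hw).trans (dist_le (.cons hux (.cons hxw .nil)))
  have hne : distToSet G u S ≠ 1 := fun h1 => by
    obtain ⟨w', hw', hd⟩ := exists_mem_dist_eq_distToSet (u := u) ⟨w, hw⟩
    exact hnadj w' hw' (dist_eq_one_iff_adj.mp (hd.trans h1))
  have := hG.distToSet_pos hu ⟨w, hw⟩
  omega

end SimpleGraph

theorem closenessCentrality_eq_sum_div {V : Type*} [Fintype V] (G : SimpleGraph V) (S : Set V) :
    closenessCentrality G S =
      (∑ v, (distToSet G v S : ℝ)) / ∑ v, (if v ∈ S then 0 else 1 : ℝ) := by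
  rw [closenessCentrality, Finset.sum_filter, Finset.card_filter, Nat.cast_sum]
  congr 1 <;> refine Finset.sum_congr rfl fun v _ => ?_
  · by_cases hv : v ∈ S <;> simp [hv, SimpleGraph.distToSet_of_mem]
  · by_cases hv : v ∈ S <;> simp [hv]

namespace Gnm

open SimpleGraph

variable {n m : ℕ}

theorem connected : (Gnm n m).Connected := by
  have hreach : ∀ x, (Gnm n m).Reachable x (.inl ()) := by
    rintro (⟨⟩ | ⟨i, j⟩ | ⟨i, j⟩)
    · rfl
    · by_cases hj : (j : ℕ) = 0
      · exact Adj.reachable (by simp [Gnm, gnmRel, hj])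
      · have hroot : (Gnm n m).Adj (.inr (.inl (i, ⟨0, j.pos⟩))) (.inl ()) := by
          simp [Gnm, gnmRel]
        exact (Adj.reachable (by simp [Gnm, gnmRel, Fin.ext_iff, hj])).trans hroot.reachable
    · by_cases hj : (j : ℕ) = 0
      · exact Adj.reachable (by simp [Gnm, gnmRel, hj])
      · have hroot : (Gnm n m).Adj (.inr (.inr (i, ⟨0, j.pos⟩))) (.inl ()) := by
          simp [Gnm, gnmRel]
        exact (Adj.reachable (by simp [Gnm, gnmRel, Fin.ext_iff, hj])).trans hroot.reachable
  exact .mk fun x y => (hreach x).trans (hreach y).symm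

def profile {α : Type*} (a c₀ c₁ t₀ t₁ : α) : GnmVertex n m → α
  | .inl _ => a
  | .inr (.inl (_, j)) => if (j : ℕ) = 0 then c₀ else c₁
  | .inr (.inr (_, j)) => if (j : ℕ) = 0 then t₀ else t₁

theorem apply_profile {α β : Type*} (f : α → β) (a c₀ c₁ t₀ t₁ : α) (x : GnmVertex n m) :
    f (profile a c₀ c₁ t₀ t₁ x) = profile (f a) (f c₀) (f c₁) (f t₀) (f t₁) x := by
  rcases x with _ | ⟨_, j⟩ | ⟨_, j⟩ <;> simp only [profile] <;> split_ifs <;> rfl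

theorem sum_profile (hn : 1 ≤ n) (a c₀ c₁ t₀ t₁ : ℝ) :
    ∑ x : GnmVertex n m, profile a c₀ c₁ t₀ t₁ x =
      a + m * (c₀ + (n - 1) * c₁) + m * (t₀ + (n - 1) * t₁) := by
  obtain ⟨k, rfl⟩ := Nat.exists_eq_add_of_le' hn
  simp only [profile, Fin.val_eq_zero_iff, Fintype.sum_sum_type, Finset.univ_unique,
    PUnit.default_eq_unit, Finset.sum_const, Finset.card_singleton, one_smul,
    Fintype.sum_prod_type, Fin.sum_univ_succ, ↓reduceIte, Fin.succ_ne_zero, Finset.card_univ,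
    Fintype.card_fin, nsmul_eq_mul, smul_add, Nat.cast_add, Nat.cast_one, add_sub_cancel_right]
  ring

theorem distToSet_setSK (x : GnmVertex n m) :
    distToSet (Gnm n m) x (setSK n m) = profile 0 0 1 1 2 x := by
  rcases x with ⟨⟩ | ⟨i, j⟩ | ⟨i, j⟩
  · exact distToSet_of_mem (Or.inl rfl)
  · by_cases hj : (j : ℕ) = 0
    · simp only [profile, hj, if_true]
      exact distToSet_of_mem (Or.inr ⟨i, j, hj, rfl⟩)
    · simp only [profile, hj, if_false]
      exact connected.preconnected.distToSet_eq_one (by simp [setSK, hj])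
        (Or.inr ⟨i, ⟨0, j.pos⟩, rfl, rfl⟩) (by simp [Gnm, gnmRel, Fin.ext_iff, hj])
  · by_cases hj : (j : ℕ) = 0
    · simp only [profile, hj, if_true]
      exact connected.preconnected.distToSet_eq_one (by simp [setSK]) (Or.inl rfl)
        (by simp [Gnm, gnmRel, hj])
    · simp only [profile, hj, if_false]
      refine connected.preconnected.distToSet_eq_two (by simp [setSK]) ?_ (Or.inl rfl)
        (x := .inr (.inr (i, ⟨0, j.pos⟩))) (by simp [Gnm, gnmRel, Fin.ext_iff, hj])
        (by simp [Gnm, gnmRel])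
      rintro _ (rfl | ⟨_, _, _, rfl⟩) <;> simp [Gnm, gnmRel, hj]

theorem distToSet_setST (x : GnmVertex n m) :
    distToSet (Gnm n m) x (setST n m) = profile 0 1 2 0 1 x := by
  rcases x with ⟨⟩ | ⟨i, j⟩ | ⟨i, j⟩
  · exact distToSet_of_mem (Or.inl rfl)
  · by_cases hj : (j : ℕ) = 0
    · simp only [profile, hj, if_true]
      exact connected.preconnected.distToSet_eq_one (by simp [setST]) (Or.inl rfl)
        (by simp [Gnm, gnmRel, hj])
    · simp only [profile, hj, if_false]
      refine connected.preconnected.distToSet_eq_two (by simp [setST]) ?_ (Or.inl rfl)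
        (x := .inr (.inl (i, ⟨0, j.pos⟩))) (by simp [Gnm, gnmRel, Fin.ext_iff, hj])
        (by simp [Gnm, gnmRel])
      rintro _ (rfl | ⟨_, _, _, rfl⟩) <;> simp [Gnm, gnmRel, hj]
  · by_cases hj : (j : ℕ) = 0
    · simp only [profile, hj, if_true]
      exact distToSet_of_mem (Or.inr ⟨i, j, hj, rfl⟩)
    · simp only [profile, hj, if_false]
      exact connected.preconnected.distToSet_eq_one (by simp [setST, hj])
        (Or.inr ⟨i, ⟨0, j.pos⟩, rfl, rfl⟩) (by simp [Gnm, gnmRel, Fin.ext_iff, hj])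

theorem indicator_compl_setSK (x : GnmVertex n m) :
    (if x ∈ setSK n m then 0 else 1 : ℝ) = profile 0 0 1 1 1 x := by
  rcases x with ⟨⟩ | ⟨i, j⟩ | ⟨i, j⟩ <;> simp [setSK, profile]

theorem indicator_compl_setST (x : GnmVertex n m) :
    (if x ∈ setST n m then 0 else 1 : ℝ) = profile 0 1 1 0 1 x := by
  rcases x with ⟨⟩ | ⟨i, j⟩ | ⟨i, j⟩ <;> simp [setST, profile]

theorem closenessCentrality_setSK (hn : 1 ≤ n) (hm : m ≠ 0) :
    closenessCentrality (Gnm n m) (setSK n m) = (3 * (n : ℝ) - 2) / (2 * (n : ℝ) - 1) := by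
  have hnum : ∑ x, (distToSet (Gnm n m) x (setSK n m) : ℝ) = m * (3 * n - 2) := by
    simp_rw [distToSet_setSK, apply_profile Nat.cast, sum_profile hn]
    push_cast
    ring
  have hden : ∑ x, (if x ∈ setSK n m then 0 else 1 : ℝ) = m * (2 * n - 1) := by
    simp_rw [indicator_compl_setSK, sum_profile hn]
    ring
  rw [closenessCentrality_eq_sum_div, hnum, hden, mul_div_mul_left _ _ (by exact_mod_cast hm)]

theorem closenessCentrality_setST (hn : 1 ≤ n) (hm : m ≠ 0) :
    closenessCentrality (Gnm n m) (setST n m) = (3 * (n : ℝ) - 2) / (2 * (n : ℝ) - 1) := by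
  have hnum : ∑ x, (distToSet (Gnm n m) x (setST n m) : ℝ) = m * (3 * n - 2) := by
    simp_rw [distToSet_setST, apply_profile Nat.cast, sum_profile hn]
    push_cast
    ring
  have hden : ∑ x, (if x ∈ setST n m then 0 else 1 : ℝ) = m * (2 * n - 1) := by
    simp_rw [indicator_compl_setST, sum_profile hn]
    ring
  rw [closenessCentrality_eq_sum_div, hnum, hden, mul_div_mul_left _ _ (by exact_mod_cast hm)]

end Gnm

/-- For integers `n ≥ 2` and `m ≥ 1`, in the graph `G_n^m` the sets `S_K`
and `S_T` have equal group closeness centrality, namely `(3n−2)/(2n−1)`. -/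
theorem closenessCentrality_SK_eq_ST (n m : ℕ) (hn : 2 ≤ n) (hm : 1 ≤ m) :
    closenessCentrality (Gnm n m) (setSK n m) = closenessCentrality (Gnm n m) (setST n m) ∧
      closenessCentrality (Gnm n m) (setSK n m) = (3 * (n : ℝ) - 2) / (2 * (n : ℝ) - 1) := by
  have hSK := Gnm.closenessCentrality_setSK (n := n) (m := m) (by omega) (by omega)
  have hST := Gnm.closenessCentrality_setST (n := n) (m := m) (by omega) (by omega)
  exact ⟨hSK.trans hST.symm, hSK⟩
end

section
/- Let n ≥ 2 and m ≥ 2 be integers. In the graph G_n^m, both S_K and S_T minimize group closeness centrality among all vertex subsets of size m+1: for every subset S of the vertex set of G_n^m with |S| = m+1, C_c(S) ≥ C_c(S_K) = C_c(S_T). -/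
open scoped Classical

/-! ### Auxiliary development -/

namespace GnmAux

variable {n m : ℕ}

def vc : GnmVertex n m := Sum.inl ()
def vK (i : Fin m) (j : Fin n) : GnmVertex n m := Sum.inr (Sum.inl (i, j))
def vT (i : Fin m) (j : Fin n) : GnmVertex n m := Sum.inr (Sum.inr (i, j))

@[simp] lemma vK_injEq {i i' : Fin m} {j j' : Fin n} :
    (vK i j : GnmVertex n m) = vK i' j' ↔ i = i' ∧ j = j' := by simp [vK]

@[simp] lemma vT_injEq {i i' : Fin m} {j j' : Fin n} :
    (vT i j : GnmVertex n m) = vT i' j' ↔ i = i' ∧ j = j' := by simp [vT]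

@[simp] lemma vc_ne_vK {i : Fin m} {j : Fin n} : (vc : GnmVertex n m) ≠ vK i j := by simp [vc, vK]
@[simp] lemma vK_ne_vc {i : Fin m} {j : Fin n} : (vK i j : GnmVertex n m) ≠ vc := by simp [vc, vK]
@[simp] lemma vc_ne_vT {i : Fin m} {j : Fin n} : (vc : GnmVertex n m) ≠ vT i j := by simp [vc, vT]
@[simp] lemma vT_ne_vc {i : Fin m} {j : Fin n} : (vT i j : GnmVertex n m) ≠ vc := by simp [vc, vT]
@[simp] lemma vK_ne_vT {i i' : Fin m} {j j' : Fin n} :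
    (vK i j : GnmVertex n m) ≠ vT i' j' := by simp [vK, vT]
@[simp] lemma vT_ne_vK {i i' : Fin m} {j j' : Fin n} :
    (vT i j : GnmVertex n m) ≠ vK i' j' := by simp [vK, vT]

@[simp] lemma adj_vc_vK {i : Fin m} {j : Fin n} :
    (Gnm n m).Adj vc (vK i j) ↔ (j : ℕ) = 0 := by
  simp [Gnm, vc, vK, gnmRel]

@[simp] lemma adj_vc_vT {i : Fin m} {j : Fin n} :
    (Gnm n m).Adj vc (vT i j) ↔ (j : ℕ) = 0 := by
  simp [Gnm, vc, vT, gnmRel]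

@[simp] lemma adj_vK_vK {i i' : Fin m} {j j' : Fin n} :
    (Gnm n m).Adj (vK i j) (vK i' j') ↔ i = i' ∧ j ≠ j' := by
  constructor
  · rintro ⟨hne, h | h⟩ <;> simp only [vK, vT, gnmRel] at h
    · exact ⟨h, fun hj => hne (by simp [vK, h, hj])⟩
    · exact ⟨h.symm, fun hj => hne (by simp [vK, h, hj])⟩
  · rintro ⟨rfl, hj⟩
    exact ⟨by simp [vK, hj], Or.inl rfl⟩

@[simp] lemma not_adj_vK_vT {i i' : Fin m} {j j' : Fin n} :
    ¬ (Gnm n m).Adj (vK i j) (vT i' j') := by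
  rintro ⟨hne, h | h⟩ <;> simp [gnmRel, vK, vT] at h

@[simp] lemma adj_vT_vT {i i' : Fin m} {j j' : Fin n} :
    (Gnm n m).Adj (vT i j) (vT i' j') ↔ i = i' ∧ j ≠ j' ∧ ((j : ℕ) = 0 ∨ (j' : ℕ) = 0) := by
  constructor
  · rintro ⟨hne, h | h⟩ <;> simp only [vK, vT, gnmRel] at h
    · exact ⟨h.1, fun hj => hne (by simp [vT, h.1, hj]), h.2⟩
    · exact ⟨h.1.symm, fun hj => hne (by simp [vT, h.1, hj]), h.2.symm⟩
  · rintro ⟨rfl, hj, hj0⟩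
    exact ⟨by simp [vT, hj], Or.inl ⟨rfl, hj0⟩⟩

@[simp] lemma adj_vK_vc {i : Fin m} {j : Fin n} :
    (Gnm n m).Adj (vK i j) vc ↔ (j : ℕ) = 0 := by
  rw [SimpleGraph.adj_comm]; exact adj_vc_vK

@[simp] lemma adj_vT_vc {i : Fin m} {j : Fin n} :
    (Gnm n m).Adj (vT i j) vc ↔ (j : ℕ) = 0 := by
  rw [SimpleGraph.adj_comm]; exact adj_vc_vT

@[simp] lemma not_adj_vT_vK {i i' : Fin m} {j j' : Fin n} :
    ¬ (Gnm n m).Adj (vT i j) (vK i' j') := by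
  rw [SimpleGraph.adj_comm]; exact not_adj_vK_vT

/-- Every vertex is one of the three kinds. -/
lemma vertex_cases (u : GnmVertex n m) :
    u = vc ∨ (∃ i j, u = vK i j) ∨ (∃ i j, u = vT i j) := by
  rcases u with u | ⟨i, j⟩ | ⟨i, j⟩
  · exact Or.inl rfl
  · exact Or.inr (Or.inl ⟨i, j, rfl⟩)
  · exact Or.inr (Or.inr ⟨i, j, rfl⟩)

/-- Neighbors of a clique vertex. -/
lemma adj_vK_iff {i : Fin m} {j : Fin n} {w : GnmVertex n m} :
    (Gnm n m).Adj (vK i j) w ↔ (w = vc ∧ (j : ℕ) = 0) ∨ ∃ j', j' ≠ j ∧ w = vK i j' := by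
  rcases vertex_cases w with rfl | ⟨i', j', rfl⟩ | ⟨i', j', rfl⟩
  · simp
  · constructor
    · rintro h
      rcases adj_vK_vK.mp h with ⟨rfl, hj⟩
      exact Or.inr ⟨j', Ne.symm hj, rfl⟩
    · rintro (⟨h, -⟩ | ⟨j'', hj, h⟩)
      · exact absurd h.symm vc_ne_vK
      · rcases vK_injEq.mp h.symm with ⟨rfl, rfl⟩
        exact adj_vK_vK.mpr ⟨rfl, hj.symm⟩
  · simp

/-- Neighbors of a star vertex. -/
lemma adj_vT_iff {i : Fin m} {j : Fin n} {w : GnmVertex n m} :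
    (Gnm n m).Adj (vT i j) w ↔
      (w = vc ∧ (j : ℕ) = 0) ∨
        ∃ j', j' ≠ j ∧ ((j : ℕ) = 0 ∨ (j' : ℕ) = 0) ∧ w = vT i j' := by
  rcases vertex_cases w with rfl | ⟨i', j', rfl⟩ | ⟨i', j', rfl⟩
  · simp
  · simp
  · constructor
    · rintro h
      rcases adj_vT_vT.mp h with ⟨rfl, hj, hj0⟩
      exact Or.inr ⟨j', Ne.symm hj, hj0, rfl⟩
    · rintro (⟨h, -⟩ | ⟨j'', hj, hj0, h⟩)
      · exact absurd h.symm vc_ne_vT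
      · rcases vT_injEq.mp h.symm with ⟨rfl, rfl⟩
        exact adj_vT_vT.mpr ⟨rfl, hj.symm, hj0⟩

/-- The designated vertex `0` of `Fin n`. -/
def j0 (hn : 2 ≤ n) : Fin n := ⟨0, by omega⟩

@[simp] lemma j0_val (hn : 2 ≤ n) : ((j0 hn : Fin n) : ℕ) = 0 := rfl

lemma reach_vc (hn : 2 ≤ n) (u : GnmVertex n m) : (Gnm n m).Reachable vc u := by
  rcases vertex_cases u with rfl | ⟨i, j, rfl⟩ | ⟨i, j, rfl⟩
  · exact SimpleGraph.Reachable.refl _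
  · by_cases hj : (j : ℕ) = 0
    · exact (adj_vc_vK.mpr hj).reachable
    · have h1 : (Gnm n m).Adj vc (vK i (j0 hn)) := adj_vc_vK.mpr rfl
      have h2 : (Gnm n m).Adj (vK i (j0 hn)) (vK i j) :=
        adj_vK_vK.mpr ⟨rfl, by intro h; apply hj; rw [← h]; rfl⟩
      exact h1.reachable.trans h2.reachable
  · by_cases hj : (j : ℕ) = 0
    · exact (adj_vc_vT.mpr hj).reachable
    · have h1 : (Gnm n m).Adj vc (vT i (j0 hn)) := adj_vc_vT.mpr rfl
      have h2 : (Gnm n m).Adj (vT i (j0 hn)) (vT i j) :=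
        adj_vT_vT.mpr ⟨rfl, by intro h; apply hj; rw [← h]; rfl, Or.inl rfl⟩
      exact h1.reachable.trans h2.reachable

lemma gnm_connected (hn : 2 ≤ n) : (Gnm n m).Connected := by
  rw [SimpleGraph.connected_iff]
  exact ⟨fun u v => ((reach_vc hn u).symm.trans (reach_vc hn v)), ⟨vc⟩⟩

/-! ### Generic distance lemmas -/

lemma two_le_dist {V : Type*} {G : SimpleGraph V} {u w : V} (hr : G.Reachable u w)
    (hne : u ≠ w) (hadj : ¬ G.Adj u w) : 2 ≤ G.dist u w := by
  have h0 : G.dist u w ≠ 0 := by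
    simpa using (hr.pos_dist_of_ne hne).ne'
  have h1 : G.dist u w ≠ 1 := fun h => hadj (SimpleGraph.dist_eq_one_iff_adj.mp h)
  omega

lemma three_le_dist {V : Type*} {G : SimpleGraph V} {u w : V} (hr : G.Reachable u w)
    (hne : u ≠ w) (hadj : ¬ G.Adj u w)
    (hcom : ∀ x, G.Adj u x → ¬ G.Adj x w) : 3 ≤ G.dist u w := by
  have h2 : 2 ≤ G.dist u w := two_le_dist hr hne hadj
  rcases Nat.lt_or_ge (G.dist u w) 3 with h | h
  · exfalso
    have hd : G.dist u w = 2 := by omega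
    obtain ⟨p, hp⟩ := hr.exists_walk_length_eq_dist
    rw [hd] at hp
    cases p with
    | nil => simp at hp
    | cons h1 q =>
      cases q with
      | nil => simp at hp
      | cons h2' r =>
        have hr0 : r.length = 0 := by simpa using hp
        have := SimpleGraph.Walk.eq_of_length_eq_zero hr0
        subst this
        exact hcom _ h1 h2'
  · exact h

/-! ### `distToSet` lemmas -/

lemma distToSet_le {V : Type*} {G : SimpleGraph V} {u w : V} {S : Set V} (hw : w ∈ S) :
    distToSet G u S ≤ G.dist u w :=
  Nat.sInf_le ⟨w, hw, rfl⟩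

lemma le_distToSet {V : Type*} {G : SimpleGraph V} {u : V} {S : Set V} (hS : S.Nonempty)
    {k : ℕ} (h : ∀ w ∈ S, k ≤ G.dist u w) : k ≤ distToSet G u S := by
  refine le_csInf (hS.image _) ?_
  rintro _ ⟨w, hw, rfl⟩
  exact h w hw

lemma distToSet_eq {V : Type*} {G : SimpleGraph V} {u w : V} {S : Set V} (hw : w ∈ S)
    {k : ℕ} (hk : G.dist u w = k) (h : ∀ w' ∈ S, k ≤ G.dist u w') :
    distToSet G u S = k :=
  le_antisymm (hk ▸ distToSet_le hw) (le_distToSet ⟨w, hw⟩ h)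

/-! ### Membership lemmas -/

@[simp] lemma vc_mem_setSK : (vc : GnmVertex n m) ∈ setSK n m := Or.inl rfl
@[simp] lemma vc_mem_setST : (vc : GnmVertex n m) ∈ setST n m := Or.inl rfl

@[simp] lemma vK_mem_setSK {i : Fin m} {j : Fin n} :
    vK i j ∈ setSK n m ↔ (j : ℕ) = 0 := by
  constructor
  · rintro (h | ⟨i', j', hj', h⟩)
    · exact absurd h vK_ne_vc
    · rcases vK_injEq.mp h with ⟨rfl, rfl⟩; exact hj'
  · intro hj; exact Or.inr ⟨i, j, hj, rfl⟩

@[simp] lemma vT_notMem_setSK {i : Fin m} {j : Fin n} : vT i j ∉ setSK n m := by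
  rintro (h | ⟨i', j', hj', h⟩)
  · exact absurd h vT_ne_vc
  · exact absurd h vT_ne_vK

@[simp] lemma vT_mem_setST {i : Fin m} {j : Fin n} :
    vT i j ∈ setST n m ↔ (j : ℕ) = 0 := by
  constructor
  · rintro (h | ⟨i', j', hj', h⟩)
    · exact absurd h vT_ne_vc
    · rcases vT_injEq.mp h with ⟨rfl, rfl⟩; exact hj'
  · intro hj; exact Or.inr ⟨i, j, hj, rfl⟩

@[simp] lemma vK_notMem_setST {i : Fin m} {j : Fin n} : vK i j ∉ setST n m := by
  rintro (h | ⟨i', j', hj', h⟩)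
  · exact absurd h vK_ne_vc
  · exact absurd h vK_ne_vT

/-! ### Distance lower bounds for clique/star vertices vs far vertices -/

/-- A clique vertex is at distance ≥ 2 from anything outside its clique,
except possibly the centre (when `j = 0`). -/
lemma two_le_dist_vK (hn : 2 ≤ n) {i : Fin m} {j : Fin n} {w : GnmVertex n m}
    (h0 : (j : ℕ) ≠ 0 ∨ w ≠ vc) (hw : ∀ j', w ≠ vK i j') :
    2 ≤ (Gnm n m).dist (vK i j) w := by
  refine two_le_dist (((reach_vc hn _).symm.trans (reach_vc hn _))) (fun h => hw j h.symm) ?_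
  intro hadj
  rcases adj_vK_iff.mp hadj with ⟨rfl, hj⟩ | ⟨j', -, rfl⟩
  · rcases h0 with h0 | h0
    · exact h0 hj
    · exact h0 rfl
  · exact hw j' rfl

/-- A non-designated clique vertex is at distance ≥ 3 from anything outside its
clique other than the centre. -/
lemma three_le_dist_vK (hn : 2 ≤ n) {i : Fin m} {j : Fin n} {w : GnmVertex n m}
    (hj : (j : ℕ) ≠ 0) (hwc : w ≠ vc) (hw : ∀ j', w ≠ vK i j') :
    3 ≤ (Gnm n m).dist (vK i j) w := by
  refine three_le_dist (((reach_vc hn _).symm.trans (reach_vc hn _)))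
    (fun h => hw j h.symm) ?_ ?_
  · intro hadj
    rcases adj_vK_iff.mp hadj with ⟨rfl, hj'⟩ | ⟨j', -, rfl⟩
    · exact hj hj'
    · exact hw j' rfl
  · intro x hx hxw
    rcases adj_vK_iff.mp hx with ⟨rfl, hj'⟩ | ⟨j', -, rfl⟩
    · exact hj hj'
    · rcases adj_vK_iff.mp hxw with ⟨rfl, -⟩ | ⟨j'', -, rfl⟩
      · exact hwc rfl
      · exact hw j'' rfl

/-- A star vertex is at distance ≥ 2 from anything outside its star,
except possibly the centre (when `j = 0`). -/
lemma two_le_dist_vT (hn : 2 ≤ n) {i : Fin m} {j : Fin n} {w : GnmVertex n m}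
    (h0 : (j : ℕ) ≠ 0 ∨ w ≠ vc) (hw : ∀ j', w ≠ vT i j') :
    2 ≤ (Gnm n m).dist (vT i j) w := by
  refine two_le_dist (((reach_vc hn _).symm.trans (reach_vc hn _))) (fun h => hw j h.symm) ?_
  intro hadj
  rcases adj_vT_iff.mp hadj with ⟨rfl, hj⟩ | ⟨j', -, -, rfl⟩
  · rcases h0 with h0 | h0
    · exact h0 hj
    · exact h0 rfl
  · exact hw j' rfl

/-- A leaf of a star is at distance ≥ 3 from anything outside its star
other than the centre. -/
lemma three_le_dist_vT (hn : 2 ≤ n) {i : Fin m} {j : Fin n} {w : GnmVertex n m}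
    (hj : (j : ℕ) ≠ 0) (hwc : w ≠ vc) (hw : ∀ j', w ≠ vT i j') :
    3 ≤ (Gnm n m).dist (vT i j) w := by
  refine three_le_dist (((reach_vc hn _).symm.trans (reach_vc hn _)))
    (fun h => hw j h.symm) ?_ ?_
  · intro hadj
    rcases adj_vT_iff.mp hadj with ⟨rfl, hj'⟩ | ⟨j', -, -, rfl⟩
    · exact hj hj'
    · exact hw j' rfl
  · intro x hx hxw
    rcases adj_vT_iff.mp hx with ⟨rfl, hj'⟩ | ⟨j', -, -, rfl⟩
    · exact hj hj'
    · rcases adj_vT_iff.mp hxw with ⟨rfl, -⟩ | ⟨j'', -, -, rfl⟩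
      · exact hwc rfl
      · exact hw j'' rfl

/-- Positivity of distance to a set not containing `u`. -/
lemma one_le_distToSet (hn : 2 ≤ n) {u : GnmVertex n m} {S : Set (GnmVertex n m)}
    (hS : S.Nonempty) (hu : u ∉ S) : 1 ≤ distToSet (Gnm n m) u S := by
  refine le_distToSet hS fun w hw => ?_
  exact ((reach_vc hn u).symm.trans (reach_vc hn w)).pos_dist_of_ne
    (fun h => hu (h ▸ hw))

/-! ### Exact distances to `S_K` and `S_T` -/

lemma dist_vK_vc_le_two (hn : 2 ≤ n) {i : Fin m} {j : Fin n} :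
    (Gnm n m).dist (vK i j) vc ≤ 2 := by
  by_cases hj : (j : ℕ) = 0
  · calc (Gnm n m).dist (vK i j) vc ≤ 1 :=
        le_of_eq (SimpleGraph.dist_eq_one_iff_adj.mpr (adj_vK_vc.mpr hj))
      _ ≤ 2 := by omega
  · have h1 : (Gnm n m).Adj (vK i j) (vK i (j0 hn)) :=
      adj_vK_vK.mpr ⟨rfl, by intro h; apply hj; rw [h]; rfl⟩
    have h2 : (Gnm n m).Adj (vK i (j0 hn)) vc := adj_vK_vc.mpr rfl
    simpa using SimpleGraph.dist_le (SimpleGraph.Walk.cons h1 (SimpleGraph.Walk.cons h2 SimpleGraph.Walk.nil))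

lemma dist_vT_vc_le_two (hn : 2 ≤ n) {i : Fin m} {j : Fin n} :
    (Gnm n m).dist (vT i j) vc ≤ 2 := by
  by_cases hj : (j : ℕ) = 0
  · calc (Gnm n m).dist (vT i j) vc ≤ 1 :=
        le_of_eq (SimpleGraph.dist_eq_one_iff_adj.mpr (adj_vT_vc.mpr hj))
      _ ≤ 2 := by omega
  · have h1 : (Gnm n m).Adj (vT i j) (vT i (j0 hn)) :=
      adj_vT_vT.mpr ⟨rfl, by intro h; apply hj; rw [h]; rfl, Or.inr rfl⟩
    have h2 : (Gnm n m).Adj (vT i (j0 hn)) vc := adj_vT_vc.mpr rfl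
    simpa using SimpleGraph.dist_le (SimpleGraph.Walk.cons h1 (SimpleGraph.Walk.cons h2 SimpleGraph.Walk.nil))

lemma mem_setSK_cases {w : GnmVertex n m} (hw : w ∈ setSK n m) :
    w = vc ∨ ∃ (i : Fin m) (j : Fin n), (j : ℕ) = 0 ∧ w = vK i j := hw

lemma mem_setST_cases {w : GnmVertex n m} (hw : w ∈ setST n m) :
    w = vc ∨ ∃ (i : Fin m) (j : Fin n), (j : ℕ) = 0 ∧ w = vT i j := hw

lemma setSK_nonempty : (setSK n m).Nonempty := ⟨vc, vc_mem_setSK⟩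
lemma setST_nonempty : (setST n m).Nonempty := ⟨vc, vc_mem_setST⟩

lemma distSK_vK (hn : 2 ≤ n) {i : Fin m} {j : Fin n} (hj : (j : ℕ) ≠ 0) :
    distToSet (Gnm n m) (vK i j) (setSK n m) = 1 := by
  refine distToSet_eq (vK_mem_setSK.mpr (j0_val hn) : vK i (j0 hn) ∈ setSK n m) ?_ ?_
  · exact SimpleGraph.dist_eq_one_iff_adj.mpr
      (adj_vK_vK.mpr ⟨rfl, by intro h; apply hj; rw [h]; rfl⟩)
  · intro w' hw'
    refine ((reach_vc hn _).symm.trans (reach_vc hn _)).pos_dist_of_ne ?_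
    rcases mem_setSK_cases hw' with rfl | ⟨i', j', hj', rfl⟩
    · exact vK_ne_vc
    · intro h
      rcases vK_injEq.mp h with ⟨rfl, rfl⟩
      exact hj hj'

lemma distSK_vT0 (hn : 2 ≤ n) {i : Fin m} {j : Fin n} (hj : (j : ℕ) = 0) :
    distToSet (Gnm n m) (vT i j) (setSK n m) = 1 := by
  refine distToSet_eq vc_mem_setSK ?_ ?_
  · exact SimpleGraph.dist_eq_one_iff_adj.mpr (adj_vT_vc.mpr hj)
  · intro w' hw'
    refine ((reach_vc hn _).symm.trans (reach_vc hn _)).pos_dist_of_ne ?_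
    rcases mem_setSK_cases hw' with rfl | ⟨i', j', hj', rfl⟩
    · exact vT_ne_vc
    · exact vT_ne_vK

lemma distSK_vT (hn : 2 ≤ n) {i : Fin m} {j : Fin n} (hj : (j : ℕ) ≠ 0) :
    distToSet (Gnm n m) (vT i j) (setSK n m) = 2 := by
  refine distToSet_eq vc_mem_setSK ?_ ?_
  · refine le_antisymm (dist_vT_vc_le_two hn) ?_
    exact two_le_dist_vT hn (Or.inl hj) (fun j' => vc_ne_vT)
  · intro w' hw'
    rcases mem_setSK_cases hw' with rfl | ⟨i', j', hj', rfl⟩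
    · exact two_le_dist_vT hn (Or.inl hj) (fun j' => vc_ne_vT)
    · exact two_le_dist_vT hn (Or.inl hj) (fun j'' => vK_ne_vT)

lemma distST_vK0 (hn : 2 ≤ n) {i : Fin m} {j : Fin n} (hj : (j : ℕ) = 0) :
    distToSet (Gnm n m) (vK i j) (setST n m) = 1 := by
  refine distToSet_eq vc_mem_setST ?_ ?_
  · exact SimpleGraph.dist_eq_one_iff_adj.mpr (adj_vK_vc.mpr hj)
  · intro w' hw'
    refine ((reach_vc hn _).symm.trans (reach_vc hn _)).pos_dist_of_ne ?_
    rcases mem_setST_cases hw' with rfl | ⟨i', j', hj', rfl⟩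
    · exact vK_ne_vc
    · exact vK_ne_vT

lemma distST_vK (hn : 2 ≤ n) {i : Fin m} {j : Fin n} (hj : (j : ℕ) ≠ 0) :
    distToSet (Gnm n m) (vK i j) (setST n m) = 2 := by
  refine distToSet_eq vc_mem_setST ?_ ?_
  · refine le_antisymm (dist_vK_vc_le_two hn) ?_
    exact two_le_dist_vK hn (Or.inl hj) (fun j' => vc_ne_vK)
  · intro w' hw'
    rcases mem_setST_cases hw' with rfl | ⟨i', j', hj', rfl⟩
    · exact two_le_dist_vK hn (Or.inl hj) (fun j' => vc_ne_vK)
    · exact two_le_dist_vK hn (Or.inl hj) (fun j'' => vT_ne_vK)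

lemma distST_vT (hn : 2 ≤ n) {i : Fin m} {j : Fin n} (hj : (j : ℕ) ≠ 0) :
    distToSet (Gnm n m) (vT i j) (setST n m) = 1 := by
  refine distToSet_eq (vT_mem_setST.mpr (j0_val hn) : vT i (j0 hn) ∈ setST n m) ?_ ?_
  · exact SimpleGraph.dist_eq_one_iff_adj.mpr
      (adj_vT_vT.mpr ⟨rfl, by intro h; apply hj; rw [h]; rfl, Or.inr rfl⟩)
  · intro w' hw'
    refine ((reach_vc hn _).symm.trans (reach_vc hn _)).pos_dist_of_ne ?_
    rcases mem_setST_cases hw' with rfl | ⟨i', j', hj', rfl⟩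
    · exact vT_ne_vc
    · intro h
      rcases vT_injEq.mp h with ⟨rfl, rfl⟩
      exact hj hj'

/-! ### Summation helpers -/

lemma sum_vertex {M : Type*} [AddCommMonoid M] (f : GnmVertex n m → M) :
    ∑ v : GnmVertex n m, f v
      = f vc + (∑ i : Fin m, ∑ j : Fin n, f (vK i j))
        + ∑ i : Fin m, ∑ j : Fin n, f (vT i j) := by
  rw [Fintype.sum_sum_type, Fintype.sum_sum_type, Fintype.sum_prod_type,
    Fintype.sum_prod_type]
  simp [vc, vK, vT, add_assoc]

lemma filter_fin_zero_card (hn : 2 ≤ n) :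
    (Finset.univ.filter (fun j : Fin n => (j : ℕ) = 0)).card = 1 := by
  have : (Finset.univ.filter (fun j : Fin n => (j : ℕ) = 0)) = {j0 hn} := by
    ext j
    simp [j0, Fin.ext_iff]
  rw [this, Finset.card_singleton]

lemma sum_fin_ite (hn : 2 ≤ n) (a b : ℕ) :
    ∑ j : Fin n, (if (j : ℕ) = 0 then a else b) = a + (n - 1) * b := by
  rw [Finset.sum_ite, Finset.sum_const, Finset.sum_const, smul_eq_mul, smul_eq_mul,
    filter_fin_zero_card hn]
  have hcard : (Finset.univ.filter (fun j : Fin n => ¬ (j : ℕ) = 0)).card = n - 1 := by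
    have h := Finset.card_filter_add_card_filter_not
      (s := (Finset.univ : Finset (Fin n))) (p := fun j : Fin n => (j : ℕ) = 0)
    rw [filter_fin_zero_card hn] at h
    simp only [Finset.card_univ, Fintype.card_fin] at h
    omega
  rw [hcard, one_mul]

lemma card_filter_mem (S : Set (GnmVertex n m)) :
    (Finset.univ.filter (fun v : GnmVertex n m => v ∈ S)).card
      = (if vc ∈ S then 1 else 0)
        + (∑ i : Fin m, (Finset.univ.filter (fun j : Fin n => vK i j ∈ S)).card)
        + ∑ i : Fin m, (Finset.univ.filter (fun j : Fin n => vT i j ∈ S)).card := by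
  simp_rw [Finset.card_filter]
  exact sum_vertex (fun v => if v ∈ S then 1 else 0)

lemma ncard_eq_card_filter (S : Set (GnmVertex n m)) :
    S.ncard = (Finset.univ.filter (fun v : GnmVertex n m => v ∈ S)).card := by
  rw [Set.ncard_eq_toFinset_card']
  congr 1
  ext v
  simp

lemma card_filter_notMem (S : Set (GnmVertex n m)) (hS : S.ncard = m + 1)
    (hle : m + 1 ≤ 1 + 2 * (m * n)) :
    (Finset.univ.filter (fun v : GnmVertex n m => v ∉ S)).card = 1 + 2 * (m * n) - (m + 1) := by
  have h := Finset.card_filter_add_card_filter_not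
    (s := (Finset.univ : Finset (GnmVertex n m)))
    (p := fun v : GnmVertex n m => v ∈ S)
  rw [← ncard_eq_card_filter, hS] at h
  have hcard : (Finset.univ : Finset (GnmVertex n m)).card = 1 + 2 * (m * n) := by
    simp [Finset.card_univ]
    ring
  rw [hcard] at h
  omega

/-! ### Values for `S_K` and `S_T` -/

lemma ncard_setSK (hn : 2 ≤ n) : (setSK n m).ncard = m + 1 := by
  rw [ncard_eq_card_filter, card_filter_mem]
  have hK : ∀ i : Fin m,
      (Finset.univ.filter (fun j : Fin n => vK i j ∈ setSK n m)).card = 1 := by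
    intro i
    simpa using filter_fin_zero_card hn
  have hT : ∀ i : Fin m,
      (Finset.univ.filter (fun j : Fin n => vT i j ∈ setSK n m)).card = 0 := by
    intro i
    simp
  simp only [vc_mem_setSK, if_pos]
  rw [Finset.sum_congr rfl (fun i _ => hK i), Finset.sum_congr rfl (fun i _ => hT i)]
  simp [add_comm]

lemma ncard_setST (hn : 2 ≤ n) : (setST n m).ncard = m + 1 := by
  rw [ncard_eq_card_filter, card_filter_mem]
  have hT : ∀ i : Fin m,
      (Finset.univ.filter (fun j : Fin n => vT i j ∈ setST n m)).card = 1 := by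
    intro i
    simpa using filter_fin_zero_card hn
  have hK : ∀ i : Fin m,
      (Finset.univ.filter (fun j : Fin n => vK i j ∈ setST n m)).card = 0 := by
    intro i
    simp
  simp only [vc_mem_setST, if_pos]
  rw [Finset.sum_congr rfl (fun i _ => hK i), Finset.sum_congr rfl (fun i _ => hT i)]
  simp [add_comm]

lemma sum_setSK (hn : 2 ≤ n) :
    ∑ v ∈ Finset.univ.filter (fun v : GnmVertex n m => v ∉ setSK n m),
        distToSet (Gnm n m) v (setSK n m) = m * (3 * n - 2) := by
  rw [Finset.sum_filter, sum_vertex (fun v => if v ∉ setSK n m then distToSet (Gnm n m) v (setSK n m) else 0)]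
  have hvc : (if (vc : GnmVertex n m) ∉ setSK n m then distToSet (Gnm n m) vc (setSK n m) else 0) = 0 := by
    simp
  have hK : ∀ i : Fin m, ∑ j : Fin n,
      (if vK i j ∉ setSK n m then distToSet (Gnm n m) (vK i j) (setSK n m) else 0) = n - 1 := by
    intro i
    have : ∀ j : Fin n,
        (if vK i j ∉ setSK n m then distToSet (Gnm n m) (vK i j) (setSK n m) else 0)
          = (if (j : ℕ) = 0 then 0 else 1) := by
      intro j
      by_cases hj : (j : ℕ) = 0
      · simp [hj]
      · rw [if_pos (by simp [hj]), distSK_vK hn hj, if_neg hj]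
    rw [Finset.sum_congr rfl (fun j _ => this j), sum_fin_ite hn]
    omega
  have hT : ∀ i : Fin m, ∑ j : Fin n,
      (if vT i j ∉ setSK n m then distToSet (Gnm n m) (vT i j) (setSK n m) else 0)
        = 1 + (n - 1) * 2 := by
    intro i
    have : ∀ j : Fin n,
        (if vT i j ∉ setSK n m then distToSet (Gnm n m) (vT i j) (setSK n m) else 0)
          = (if (j : ℕ) = 0 then 1 else 2) := by
      intro j
      by_cases hj : (j : ℕ) = 0
      · rw [if_pos (by simp), distSK_vT0 hn hj, if_pos hj]
      · rw [if_pos (by simp), distSK_vT hn hj, if_neg hj]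
    rw [Finset.sum_congr rfl (fun j _ => this j), sum_fin_ite hn]
  rw [hvc, Finset.sum_congr rfl (fun i _ => hK i), Finset.sum_congr rfl (fun i _ => hT i)]
  simp only [Finset.sum_const, Finset.card_univ, Fintype.card_fin, smul_eq_mul, zero_add]
  have h1 : 1 ≤ n := by omega
  cases' Nat.exists_eq_add_of_le h1 with k hk
  subst hk
  have e1 : 1 + k - 1 = k := by omega
  have e2 : 3 * (1 + k) - 2 = 3 * k + 1 := by omega
  rw [e1, e2]
  ring

lemma sum_setST (hn : 2 ≤ n) :
    ∑ v ∈ Finset.univ.filter (fun v : GnmVertex n m => v ∉ setST n m),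
        distToSet (Gnm n m) v (setST n m) = m * (3 * n - 2) := by
  rw [Finset.sum_filter, sum_vertex (fun v => if v ∉ setST n m then distToSet (Gnm n m) v (setST n m) else 0)]
  have hvc : (if (vc : GnmVertex n m) ∉ setST n m then distToSet (Gnm n m) vc (setST n m) else 0) = 0 := by
    simp
  have hK : ∀ i : Fin m, ∑ j : Fin n,
      (if vK i j ∉ setST n m then distToSet (Gnm n m) (vK i j) (setST n m) else 0)
        = 1 + (n - 1) * 2 := by
    intro i
    have : ∀ j : Fin n,
        (if vK i j ∉ setST n m then distToSet (Gnm n m) (vK i j) (setST n m) else 0)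
          = (if (j : ℕ) = 0 then 1 else 2) := by
      intro j
      by_cases hj : (j : ℕ) = 0
      · rw [if_pos (by simp), distST_vK0 hn hj, if_pos hj]
      · rw [if_pos (by simp), distST_vK hn hj, if_neg hj]
    rw [Finset.sum_congr rfl (fun j _ => this j), sum_fin_ite hn]
  have hT : ∀ i : Fin m, ∑ j : Fin n,
      (if vT i j ∉ setST n m then distToSet (Gnm n m) (vT i j) (setST n m) else 0) = n - 1 := by
    intro i
    have : ∀ j : Fin n,
        (if vT i j ∉ setST n m then distToSet (Gnm n m) (vT i j) (setST n m) else 0)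
          = (if (j : ℕ) = 0 then 0 else 1) := by
      intro j
      by_cases hj : (j : ℕ) = 0
      · simp [hj]
      · rw [if_pos (by simp [hj]), distST_vT hn hj, if_neg hj]
    rw [Finset.sum_congr rfl (fun j _ => this j), sum_fin_ite hn]
    omega
  rw [hvc, Finset.sum_congr rfl (fun i _ => hK i), Finset.sum_congr rfl (fun i _ => hT i)]
  simp only [Finset.sum_const, Finset.card_univ, Fintype.card_fin, smul_eq_mul, zero_add]
  have h1 : 1 ≤ n := by omega
  cases' Nat.exists_eq_add_of_le h1 with k hk
  subst hk
  have e1 : 1 + k - 1 = k := by omega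
  have e2 : 3 * (1 + k) - 2 = 3 * k + 1 := by omega
  rw [e1, e2]
  ring

/-! ### Block lower bounds for arbitrary `S` -/

lemma blockK_zero (hn : 2 ≤ n) {i : Fin m} {S : Set (GnmVertex n m)} (hSne : S.Nonempty)
    (h0 : ∀ j : Fin n, vK i j ∉ S) :
    2 * n - 1 + (if vc ∈ S then 0 else 1) * n ≤ ∑ j : Fin n, distToSet (Gnm n m) (vK i j) S := by
  have hterm : ∀ j : Fin n, (if (j : ℕ) = 0 then 1 else 2) + (if vc ∈ S then 0 else 1)
      ≤ distToSet (Gnm n m) (vK i j) S := by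
    intro j
    refine le_distToSet hSne fun w hw => ?_
    have hwK : ∀ j', w ≠ vK i j' := fun j' h => h0 j' (h ▸ hw)
    by_cases hc : vc ∈ S
    · rw [if_pos hc, add_zero]
      by_cases hj : (j : ℕ) = 0
      · rw [if_pos hj]
        exact ((reach_vc hn _).symm.trans (reach_vc hn _)).pos_dist_of_ne
          (fun h => hwK j h.symm)
      · rw [if_neg hj]
        exact two_le_dist_vK hn (Or.inl hj) hwK
    · rw [if_neg hc]
      have hwc : w ≠ vc := fun h => hc (h ▸ hw)
      by_cases hj : (j : ℕ) = 0
      · rw [if_pos hj]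
        exact two_le_dist_vK hn (Or.inr hwc) hwK
      · rw [if_neg hj]
        exact three_le_dist_vK hn hj hwc hwK
  calc 2 * n - 1 + (if vc ∈ S then 0 else 1) * n
      = ∑ j : Fin n, ((if (j : ℕ) = 0 then 1 else 2) + (if vc ∈ S then 0 else 1)) := by
        rw [Finset.sum_add_distrib, sum_fin_ite hn, Finset.sum_const, Finset.card_univ,
          Fintype.card_fin, smul_eq_mul]
        by_cases hc : vc ∈ S
        · rw [if_pos hc]; omega
        · rw [if_neg hc]; omega
    _ ≤ _ := Finset.sum_le_sum (fun j _ => hterm j)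

lemma blockT_zero (hn : 2 ≤ n) {i : Fin m} {S : Set (GnmVertex n m)} (hSne : S.Nonempty)
    (h0 : ∀ j : Fin n, vT i j ∉ S) :
    2 * n - 1 + (if vc ∈ S then 0 else 1) * n ≤ ∑ j : Fin n, distToSet (Gnm n m) (vT i j) S := by
  have hterm : ∀ j : Fin n, (if (j : ℕ) = 0 then 1 else 2) + (if vc ∈ S then 0 else 1)
      ≤ distToSet (Gnm n m) (vT i j) S := by
    intro j
    refine le_distToSet hSne fun w hw => ?_
    have hwT : ∀ j', w ≠ vT i j' := fun j' h => h0 j' (h ▸ hw)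
    by_cases hc : vc ∈ S
    · rw [if_pos hc, add_zero]
      by_cases hj : (j : ℕ) = 0
      · rw [if_pos hj]
        exact ((reach_vc hn _).symm.trans (reach_vc hn _)).pos_dist_of_ne
          (fun h => hwT j h.symm)
      · rw [if_neg hj]
        exact two_le_dist_vT hn (Or.inl hj) hwT
    · rw [if_neg hc]
      have hwc : w ≠ vc := fun h => hc (h ▸ hw)
      by_cases hj : (j : ℕ) = 0
      · rw [if_pos hj]
        exact two_le_dist_vT hn (Or.inr hwc) hwT
      · rw [if_neg hj]
        exact three_le_dist_vT hn hj hwc hwT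
  calc 2 * n - 1 + (if vc ∈ S then 0 else 1) * n
      = ∑ j : Fin n, ((if (j : ℕ) = 0 then 1 else 2) + (if vc ∈ S then 0 else 1)) := by
        rw [Finset.sum_add_distrib, sum_fin_ite hn, Finset.sum_const, Finset.card_univ,
          Fintype.card_fin, smul_eq_mul]
        by_cases hc : vc ∈ S
        · rw [if_pos hc]; omega
        · rw [if_neg hc]; omega
    _ ≤ _ := Finset.sum_le_sum (fun j _ => hterm j)

/-- Generic block bound: the number of block vertices outside `S`. -/
lemma block_pos (hn : 2 ≤ n) {S : Set (GnmVertex n m)} (hSne : S.Nonempty)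
    (g : Fin n → GnmVertex n m) :
    n - (Finset.univ.filter (fun j : Fin n => g j ∈ S)).card
      ≤ ∑ j : Fin n, (if g j ∉ S then distToSet (Gnm n m) (g j) S else 0) := by
  have h1 : ∀ j : Fin n, (if g j ∉ S then 1 else 0)
      ≤ (if g j ∉ S then distToSet (Gnm n m) (g j) S else 0) := by
    intro j
    by_cases hj : g j ∉ S
    · rw [if_pos hj, if_pos hj]
      exact one_le_distToSet hn hSne hj
    · rw [if_neg hj, if_neg hj]
  refine le_trans ?_ (Finset.sum_le_sum (fun j _ => h1 j))
  rw [← Finset.card_filter]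
  have h := Finset.card_filter_add_card_filter_not
    (s := (Finset.univ : Finset (Fin n))) (p := fun j : Fin n => g j ∈ S)
  simp only [Finset.card_univ, Fintype.card_fin] at h
  omega

/-! ### The main lower bound -/

lemma arith1 (n m pK pT AK AT : ℕ) (hn : 2 ≤ n) (h : AK + AT = m)
    (h1 : pK ≤ AK) (h2 : pT ≤ AT) :
    m * (3 * n - 2) + AK + AT
      ≤ ((m - pK) * (2 * n - 1) + pK * n) + ((m - pT) * (2 * n - 1) + pT * n) := by
  have hpKm : pK ≤ m := by omega
  have hpTm : pT ≤ m := by omega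
  zify [hpKm, hpTm, show 1 ≤ 2 * n by omega, show 2 ≤ 3 * n by omega]
  nlinarith [mul_nonneg (show (0:ℤ) ≤ (m : ℤ) - (pK + pT) by
      have : pK + pT ≤ m := by omega
      omega)
    (show (0:ℤ) ≤ (n : ℤ) - 1 by omega)]

lemma arith2 (n m pK pT AK AT : ℕ) (hn : 2 ≤ n) (hm : 2 ≤ m) (h : AK + AT = m + 1)
    (h1 : pK ≤ AK) (h2 : pT ≤ AT) (hpKm : pK ≤ m) (hpTm : pT ≤ m) :
    m * (3 * n - 2) + AK + AT
      ≤ 1 + (((m - pK) * (3 * n - 1) + pK * n) + ((m - pT) * (3 * n - 1) + pT * n)) := by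
  zify [hpKm, hpTm, show 1 ≤ 3 * n by omega, show 2 ≤ 3 * n by omega]
  nlinarith [mul_nonneg (show (0:ℤ) ≤ (m : ℤ) + 1 - (pK + pT) by
      have : pK + pT ≤ m + 1 := by omega
      omega)
    (show (0:ℤ) ≤ 2 * (n : ℤ) - 1 by omega),
    mul_nonneg (show (0:ℤ) ≤ (m : ℤ) - 2 by omega)
      (show (0:ℤ) ≤ (n : ℤ) by positivity)]

lemma main_lb (hn : 2 ≤ n) (hm : 2 ≤ m) (S : Set (GnmVertex n m)) (hS : S.ncard = m + 1) :
    m * (3 * n - 2) ≤ ∑ v ∈ Finset.univ.filter (fun v : GnmVertex n m => v ∉ S),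
        distToSet (Gnm n m) v S := by
  classical
  have hSne : S.Nonempty := Set.nonempty_of_ncard_ne_zero (by omega)
  set aK : Fin m → ℕ := fun i => (Finset.univ.filter (fun j : Fin n => vK i j ∈ S)).card with haK
  set aT : Fin m → ℕ := fun i => (Finset.univ.filter (fun j : Fin n => vT i j ∈ S)).card with haT
  -- the count equation
  have hcount : (if vc ∈ S then 1 else 0) + (∑ i, aK i) + ∑ i, aT i = m + 1 := by
    rw [haK, haT, ← card_filter_mem S, ← ncard_eq_card_filter, hS]
  have haK_le : ∀ i, aK i ≤ n := fun i => by
    rw [haK]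
    exact (Finset.card_filter_le _ _).trans (by simp)
  have haT_le : ∀ i, aT i ≤ n := fun i => by
    rw [haT]
    exact (Finset.card_filter_le _ _).trans (by simp)
  -- block bounds
  have hKi : ∀ i : Fin m, (if aK i = 0 then 2 * n - 1 + (if vc ∈ S then 0 else 1) * n
        else n - aK i)
      ≤ ∑ j : Fin n, (if vK i j ∉ S then distToSet (Gnm n m) (vK i j) S else 0) := by
    intro i
    by_cases h0 : aK i = 0
    · rw [if_pos h0]
      have hnot : ∀ j : Fin n, vK i j ∉ S := by
        intro j hj
        have : j ∈ Finset.univ.filter (fun j : Fin n => vK i j ∈ S) := by simp [hj]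
        rw [Finset.card_eq_zero.mp h0] at this
        exact absurd this (Finset.notMem_empty j)
      calc 2 * n - 1 + (if vc ∈ S then 0 else 1) * n
          ≤ ∑ j : Fin n, distToSet (Gnm n m) (vK i j) S := blockK_zero hn hSne hnot
        _ = _ := Finset.sum_congr rfl (fun j _ => (if_pos (hnot j)).symm)
    · rw [if_neg h0]
      exact block_pos hn hSne _
  have hTi : ∀ i : Fin m, (if aT i = 0 then 2 * n - 1 + (if vc ∈ S then 0 else 1) * n
        else n - aT i)
      ≤ ∑ j : Fin n, (if vT i j ∉ S then distToSet (Gnm n m) (vT i j) S else 0) := by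
    intro i
    by_cases h0 : aT i = 0
    · rw [if_pos h0]
      have hnot : ∀ j : Fin n, vT i j ∉ S := by
        intro j hj
        have : j ∈ Finset.univ.filter (fun j : Fin n => vT i j ∈ S) := by simp [hj]
        rw [Finset.card_eq_zero.mp h0] at this
        exact absurd this (Finset.notMem_empty j)
      calc 2 * n - 1 + (if vc ∈ S then 0 else 1) * n
          ≤ ∑ j : Fin n, distToSet (Gnm n m) (vT i j) S := blockT_zero hn hSne hnot
        _ = _ := Finset.sum_congr rfl (fun j _ => (if_pos (hnot j)).symm)
    · rw [if_neg h0]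
      exact block_pos hn hSne _
  -- arithmetic on the block bounds
  have bsum : ∀ (a : Fin m → ℕ), (∀ i, a i ≤ n) → ∀ Q : ℕ,
      (∑ i, (if a i = 0 then Q else n - a i)) + ∑ i, a i
        = (m - (Finset.univ.filter (fun i : Fin m => a i ≠ 0)).card) * Q
          + (Finset.univ.filter (fun i : Fin m => a i ≠ 0)).card * n := by
    intro a ha Q
    set P : Finset (Fin m) := Finset.univ.filter (fun i : Fin m => a i ≠ 0) with hP
    have hsplit := Finset.sum_filter_add_sum_filter_not Finset.univ
      (fun i : Fin m => a i ≠ 0) (fun i => if a i = 0 then Q else n - a i)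
    have h1 : ∑ i ∈ P, (if a i = 0 then Q else n - a i) = ∑ i ∈ P, (n - a i) := by
      refine Finset.sum_congr rfl fun i hi => ?_
      rw [if_neg (Finset.mem_filter.mp hi).2]
    have h2 : ∑ i ∈ Finset.univ.filter (fun i : Fin m => ¬ a i ≠ 0),
        (if a i = 0 then Q else n - a i)
          = (m - P.card) * Q := by
      have hcard : (Finset.univ.filter (fun i : Fin m => ¬ a i ≠ 0)).card = m - P.card := by
        rw [Finset.filter_not, Finset.card_sdiff_of_subset (Finset.filter_subset _ _), Finset.card_univ,
          Fintype.card_fin, hP]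
      rw [Finset.sum_congr rfl (fun i hi => if_pos (not_not.mp (Finset.mem_filter.mp hi).2)),
        Finset.sum_const, hcard, smul_eq_mul]
    have h3 : (∑ i ∈ P, (n - a i)) + ∑ i ∈ P, a i = P.card * n := by
      rw [← Finset.sum_add_distrib]
      rw [Finset.sum_congr rfl (fun i _ => Nat.sub_add_cancel (ha i)), Finset.sum_const,
        smul_eq_mul]
    have h4 : ∑ i ∈ P, a i = ∑ i, a i := Finset.sum_filter_ne_zero Finset.univ
    rw [← hsplit, h1, h2]
    linarith [h3, h4]
  have hPa : ∀ a : Fin m → ℕ,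
      (Finset.univ.filter (fun i : Fin m => a i ≠ 0)).card ≤ ∑ i, a i := by
    intro a
    have h1 := Finset.card_nsmul_le_sum
      (Finset.univ.filter (fun i : Fin m => a i ≠ 0)) a 1
      (fun i hi => Nat.one_le_iff_ne_zero.mpr (Finset.mem_filter.mp hi).2)
    have h2 : ∑ i ∈ Finset.univ.filter (fun i : Fin m => a i ≠ 0), a i = ∑ i, a i :=
      Finset.sum_filter_ne_zero Finset.univ
    simpa [h2] using h1
  have hpKm : (Finset.univ.filter (fun i : Fin m => aK i ≠ 0)).card ≤ m :=
    (Finset.card_filter_le _ _).trans (by simp)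
  have hpTm : (Finset.univ.filter (fun i : Fin m => aT i ≠ 0)).card ≤ m :=
    (Finset.card_filter_le _ _).trans (by simp)
  -- decompose the total sum
  rw [Finset.sum_filter, sum_vertex (fun v => if v ∉ S then distToSet (Gnm n m) v S else 0)]
  have hvc : (if vc ∈ S then 0 else 1)
      ≤ (if (vc : GnmVertex n m) ∉ S then distToSet (Gnm n m) vc S else 0) := by
    by_cases hc : vc ∈ S
    · simp [hc]
    · rw [if_neg hc, if_pos hc]
      exact one_le_distToSet hn hSne hc
  have htotal : (if vc ∈ S then 0 else 1)
      + (∑ i, (if aK i = 0 then 2 * n - 1 + (if vc ∈ S then 0 else 1) * n else n - aK i))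
      + (∑ i, (if aT i = 0 then 2 * n - 1 + (if vc ∈ S then 0 else 1) * n else n - aT i))
      ≤ (if (vc : GnmVertex n m) ∉ S then distToSet (Gnm n m) vc S else 0)
        + (∑ i : Fin m, ∑ j : Fin n, (if vK i j ∉ S then distToSet (Gnm n m) (vK i j) S else 0))
        + ∑ i : Fin m, ∑ j : Fin n, (if vT i j ∉ S then distToSet (Gnm n m) (vT i j) S else 0) :=
    add_le_add (add_le_add hvc (Finset.sum_le_sum fun i _ => hKi i))
      (Finset.sum_le_sum fun i _ => hTi i)
  refine le_trans ?_ htotal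
  by_cases hc : vc ∈ S
  · simp only [if_pos hc]
    have eQ : 2 * n - 1 + 0 * n = 2 * n - 1 := by omega
    rw [eQ]
    have hbK := bsum aK haK_le (2 * n - 1)
    have hbT := bsum aT haT_le (2 * n - 1)
    have hcount2 : (∑ i, aK i) + ∑ i, aT i = m := by
      rw [if_pos hc] at hcount; omega
    have harith := arith1 n m _ _ _ _ hn hcount2 (hPa aK) (hPa aT)
    omega
  · simp only [if_neg hc]
    have eQ : 2 * n - 1 + 1 * n = 3 * n - 1 := by omega
    rw [eQ]
    have hbK := bsum aK haK_le (3 * n - 1)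
    have hbT := bsum aT haT_le (3 * n - 1)
    have hcount2 : (∑ i, aK i) + ∑ i, aT i = m + 1 := by
      rw [if_neg hc] at hcount; omega
    have harith := arith2 n m _ _ _ _ hn hm hcount2 (hPa aK) (hPa aT) hpKm hpTm
    omega

end GnmAux

/-- For integers `n ≥ 2` and `m ≥ 2`, in the graph `G_n^m` both `S_K` and
`S_T` minimize group closeness centrality among all vertex subsets of size `m+1`:
every subset `S` with `|S| = m+1` satisfies `C_c(S) ≥ C_c(S_K) = C_c(S_T)`. -/
theorem closenessCentrality_SK_min (n m : ℕ) (hn : 2 ≤ n) (hm : 2 ≤ m) :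
    (∀ S : Set (GnmVertex n m), S.ncard = m + 1 →
        closenessCentrality (Gnm n m) (setSK n m) ≤ closenessCentrality (Gnm n m) S) ∧
      closenessCentrality (Gnm n m) (setSK n m) =
        closenessCentrality (Gnm n m) (setST n m) := by
  classical
  have h2m : 2 * m ≤ m * n := by nlinarith
  have hle : m + 1 ≤ 1 + 2 * (m * n) := by omega
  have hBpos : (0 : ℕ) < 1 + 2 * (m * n) - (m + 1) := by omega
  have key : ∀ S : Set (GnmVertex n m), S.ncard = m + 1 →
      closenessCentrality (Gnm n m) S =
        ((∑ v ∈ Finset.univ.filter (fun v : GnmVertex n m => v ∉ S),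
            distToSet (Gnm n m) v S : ℕ) : ℝ)
          / ((1 + 2 * (m * n) - (m + 1) : ℕ) : ℝ) := by
    intro S hS
    rw [closenessCentrality, GnmAux.card_filter_notMem S hS hle, Nat.cast_sum]
  constructor
  · intro S hS
    rw [key S hS, key _ (GnmAux.ncard_setSK hn), GnmAux.sum_setSK hn]
    have hX := GnmAux.main_lb hn hm S hS
    have hb : (0 : ℝ) < ((1 + 2 * (m * n) - (m + 1) : ℕ) : ℝ) := by exact_mod_cast hBpos
    rw [div_le_div_iff_of_pos_right hb]
    exact_mod_cast hX
  · rw [key _ (GnmAux.ncard_setSK hn), key _ (GnmAux.ncard_setST hn),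
      GnmAux.sum_setSK hn, GnmAux.sum_setST hn]
end
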